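/- If p = 2 and either (e = 1, m = 1) or (e ≥ 1, m ≥ 2), then the linearized Wenger graph L_m(q), q = 2^e, contains no cycle of length 6. -/
import Mathlib


/-- In the linearized Wenger graph, point `P` is adjacent to line `L` iff
`l_k + p_k = p_1^{p^{k-2}} l_1` for `2 ≤ k ≤ m+1`. -/
def lwAdj (p : ℕ) {F : Type} [Field F] {m : ℕ} (P L : Fin (m + 1) → F) : Prop :=
  ∀ k : Fin m, L k.succ + P k.succ = P 0 ^ p ^ (k : ℕ) * L 0

/-- The linearized Wenger graph `L_m(q)` as a bipartite graph on points ⊕ lines. -/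
def lwGraph (p : ℕ) (F : Type) [Field F] (m : ℕ) :
    SimpleGraph ((Fin (m + 1) → F) ⊕ (Fin (m + 1) → F)) :=
  SimpleGraph.fromRel fun v w => match v, w with
    | Sum.inl P, Sum.inr L => lwAdj p P L
    | _, _ => False

/-- Two points adjacent to a common line and sharing first coordinate are equal. -/
lemma lw_point_eq {F : Type} [Field F] {m : ℕ} {P P' L : Fin (m + 1) → F}
    (h : lwAdj 2 P L) (h' : lwAdj 2 P' L) (h0 : P 0 = P' 0) : P = P' := by
  funext i
  refine Fin.cases h0 (fun k => ?_) i
  have e1 := h k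
  have e2 := h' k
  rw [h0] at e1
  exact add_left_cancel (e1.trans e2.symm)

/-- Two lines adjacent to a common point and sharing first coordinate are equal. -/
lemma lw_line_eq {F : Type} [Field F] {m : ℕ} {P L L' : Fin (m + 1) → F}
    (h : lwAdj 2 P L) (h' : lwAdj 2 P L') (h0 : L 0 = L' 0) : L = L' := by
  funext i
  refine Fin.cases h0 (fun k => ?_) i
  have e1 := h k
  have e2 := h' k
  rw [h0] at e1
  exact add_right_cancel (e1.trans e2.symm)

lemma lw_diff_eq {e m : ℕ} {P P' L : Fin (m + 1) → GaloisField 2 e}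
    (h : lwAdj 2 P L) (h' : lwAdj 2 P' L) (k : Fin m) :
    P k.succ - P' k.succ = (P 0 - P' 0) ^ 2 ^ (k : ℕ) * L 0 := by
  have e1 := h k
  have e2 := h' k
  have hfr := sub_pow_char_pow (P 0) (P' 0) (k : ℕ) (p := 2)
  linear_combination e1 - e2 - L 0 * hfr

/-- The core combinatorial fact: there is no 6-cycle `P1 L1 P2 L2 P3 L3` in the
linearized Wenger graph in characteristic 2 (for the stated parameters). -/
lemma lw_core (e m : ℕ) (h : (e = 1 ∧ m = 1) ∨ (1 ≤ e ∧ 2 ≤ m))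
    (P1 P2 P3 L1 L2 L3 : Fin (m + 1) → GaloisField 2 e)
    (h11 : lwAdj 2 P1 L1) (h21 : lwAdj 2 P2 L1) (h22 : lwAdj 2 P2 L2)
    (h32 : lwAdj 2 P3 L2) (h33 : lwAdj 2 P3 L3) (h13 : lwAdj 2 P1 L3)
    (hP12 : P1 ≠ P2) (hP23 : P2 ≠ P3) (hP13 : P1 ≠ P3)
    (hL12 : L1 ≠ L2) (hL23 : L2 ≠ L3) (hL13 : L1 ≠ L3) : False := by
  have h2 : (2 : GaloisField 2 e) = 0 := by
    have := CharP.cast_eq_zero (GaloisField 2 e) 2; simpa using this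
  set u1 := P1 0 - P2 0 with hu1
  set u2 := P2 0 - P3 0 with hu2
  set u3 := P3 0 - P1 0 with hu3
  have hu1ne : u1 ≠ 0 := sub_ne_zero.mpr (fun hh => hP12 (lw_point_eq h11 h21 hh))
  have hu2ne : u2 ≠ 0 := sub_ne_zero.mpr (fun hh => hP23 (lw_point_eq h22 h32 hh))
  have hu3ne : u3 ≠ 0 := sub_ne_zero.mpr (fun hh => hP13 (lw_point_eq h13 h33 hh.symm))
  have hbne : L2 0 - L3 0 ≠ 0 := sub_ne_zero.mpr (fun hh => hL23 (lw_line_eq h32 h33 hh))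
  have hE : ∀ k : Fin m, u1 ^ 2 ^ (k : ℕ) * L1 0 + u2 ^ 2 ^ (k : ℕ) * L2 0
      + u3 ^ 2 ^ (k : ℕ) * L3 0 = 0 := by
    intro k
    have d1 := lw_diff_eq h11 h21 k
    have d2 := lw_diff_eq h22 h32 k
    have d3 := lw_diff_eq h33 h13 k
    linear_combination - d1 - d2 - d3
  rcases h with ⟨he, hm⟩ | ⟨he, hm⟩
  · -- e = 1, m = 1 : field has 2 elements
    subst he
    have sq : ∀ x : GaloisField 2 1, x ^ 2 = x := by
      intro x
      have : Fintype (GaloisField 2 1) := Fintype.ofFinite _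
      have hh := FiniteField.pow_card x
      rwa [← Nat.card_eq_fintype_card, GaloisField.card 2 1 one_ne_zero] at hh
    have h1eq : u1 = 1 := by
      have : u1 * (u1 - 1) = 0 := by linear_combination sq u1
      rcases mul_eq_zero.mp this with hh | hh
      · exact absurd hh hu1ne
      · linear_combination hh
    have h2eq : u2 = 1 := by
      have : u2 * (u2 - 1) = 0 := by linear_combination sq u2
      rcases mul_eq_zero.mp this with hh | hh
      · exact absurd hh hu2ne
      · linear_combination hh
    exact hu3ne (by rw [hu3, hu1, hu2] at *; linear_combination - h1eq - h2eq - h2)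
  · -- m ≥ 2
    have E0 := hE ⟨0, by omega⟩
    have E1 := hE ⟨1, by omega⟩
    norm_num at E0 E1
    have key : (L2 0 - L3 0) * u2 * (u1 - u2) = 0 := by
      rw [hu1, hu2, hu3] at *
      linear_combination u1 * E0 - E1
        + ((L3 0) * (u1 ^ 2 + u1 * u2 + u2 ^ 2)) * h2
    rcases mul_eq_zero.mp key with hh | hh
    · rcases mul_eq_zero.mp hh with hh' | hh'
      · exact hbne hh'
      · exact hu2ne hh'
    · exact hu3ne (by rw [hu3, hu1, hu2] at *; linear_combination - hh - u2 * h2)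

/-- For `p = 2` and either `(e = 1, m = 1)` or `(e ≥ 1, m ≥ 2)`, the linearized Wenger
graph `L_m(2^e)` contains no cycle of length `6`. -/
theorem stmt15 (e m : ℕ) (h : (e = 1 ∧ m = 1) ∨ (1 ≤ e ∧ 2 ≤ m))
    (v : (Fin (m + 1) → GaloisField 2 e) ⊕ (Fin (m + 1) → GaloisField 2 e))
    (c : (lwGraph 2 (GaloisField 2 e) m).Walk v v) :
    ¬(c.IsCycle ∧ c.length = 6) := by
  rintro ⟨hcyc, hlen⟩
  cases c with
  | nil => simp at hlen
  | @cons _ _ v1 h1 c =>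
  cases c with
  | nil => simp at hlen
  | @cons _ _ v2 h2 c =>
  cases c with
  | nil => simp at hlen
  | @cons _ _ v3 h3 c =>
  cases c with
  | nil => simp at hlen
  | @cons _ _ v4 h4 c =>
  cases c with
  | nil => simp at hlen
  | @cons _ _ v5 h5 c =>
  cases c with
  | nil => simp at hlen
  | @cons _ _ v6 h6 c =>
  cases c with
  | cons h7 c => simp [SimpleGraph.Walk.length_cons] at hlen
  | nil =>
    rename_i w1 w2 w3 w4 w5
    clear hlen
    have hnd := hcyc.support_nodup
    simp [SimpleGraph.Walk.support_cons, List.nodup_cons] at hnd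
    obtain ⟨⟨n12,n13,n14,n15,n10⟩,⟨n23,n24,n25,n20⟩,⟨n34,n35,n30⟩,⟨n45,n40⟩,n50⟩ := hnd
    replace h1 := h1.2
    replace h2 := h2.2
    replace h3 := h3.2
    replace h4 := h4.2
    replace h5 := h5.2
    replace h6 := h6.2
    rcases v with P0 | Q0 <;> rcases w1 with P1 | Q1 <;> rcases w2 with P2 | Q2 <;>
      rcases w3 with P3 | Q3 <;> rcases w4 with P4 | Q4 <;> rcases w5 with P5 | Q5 <;>
      simp only [lwGraph, SimpleGraph.fromRel_adj] at h1 h2 h3 h4 h5 h6 <;>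
      simp at h1 h2 h3 h4 h5 h6
    · -- v = inl P0, pattern P0 Q1 P2 Q3 P4 Q5
      exact lw_core e m h P0 P2 P4 Q1 Q3 Q5 h1 h2 h3 h4 h5 h6
        (Ne.symm (by simpa using n20))
        (by simpa using n24)
        (Ne.symm (by simpa using n40))
        (by simpa using n13)
        (by simpa using n35)
        (by simpa using n15)
    · -- v = inr Q0, pattern Q0 P1 Q2 P3 Q4 P5
      exact lw_core e m h P1 P3 P5 Q2 Q4 Q0 h2 h3 h4 h5 h6 h1
        (by simpa using n13)
        (by simpa using n35)
        (by simpa using n15)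
        (by simpa using n24)
        (by simpa using n40)
        (by simpa using n20)
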